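/- For the closed topology on the topos of graphs, the sheaves are exactly the graphs with precisely one node, and the category of these sheaves is equivalent to the category of sets via the arc functor; the only separated non-sheaf is the empty graph. -/

import Mathlib

/-- A directed graph: nodes, arcs, source and target maps. -/
structure Graph' where
  N : Type
  A : Type
  src : A → N
  tgt : A → N

/-- A graph morphism. -/
@[ext]
structure Hom (G H : Graph') where
  fN : G.N → H.N
  fA : G.A → H.A
  hsrc : ∀ a, H.src (fA a) = fN (G.src a)
  htgt : ∀ a, H.tgt (fA a) = fN (G.tgt a)

/-- Composition of graph morphisms. -/
def Hom.comp {G H K : Graph'} (g : Hom H K) (f : Hom G H) : Hom G K where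
  fN := g.fN ∘ f.fN
  fA := g.fA ∘ f.fA
  hsrc a := by simp [g.hsrc, f.hsrc]
  htgt a := by simp [g.htgt, f.htgt]

/-- A subgraph of `G`, given by a set of nodes and a set of arcs whose
endpoints belong to the node set. -/
def IsSubgraph (G : Graph') (SN : Set G.N) (SA : Set G.A) : Prop :=
  ∀ a ∈ SA, G.src a ∈ SN ∧ G.tgt a ∈ SN

/-- The subgraph of `Y` determined by node set `SN` and arc set `SA`. -/
def subG (Y : Graph') (SN : Set Y.N) (SA : Set Y.A) (h : IsSubgraph Y SN SA) : Graph' where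
  N := SN
  A := SA
  src a := ⟨Y.src a.val, (h a.val a.prop).1⟩
  tgt a := ⟨Y.tgt a.val, (h a.val a.prop).2⟩

/-- The inclusion of a subgraph. -/
def incl (Y : Graph') (SN : Set Y.N) (SA : Set Y.A) (h : IsSubgraph Y SN SA) :
    Hom (subG Y SN SA h) Y :=
  ⟨Subtype.val, Subtype.val, fun _ => rfl, fun _ => rfl⟩

/-- `G` is a sheaf for the closed topology: every morphism from a dense subgraph
(one containing all arcs) of any graph `Y` extends uniquely to `Y`. -/
def SheafC (G : Graph') : Prop :=
  ∀ (Y : Graph') (SN : Set Y.N) (h : IsSubgraph Y SN Set.univ)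
    (f : Hom (subG Y SN Set.univ h) G),
      ∃! g : Hom Y G, g.comp (incl Y SN Set.univ h) = f

/-- `G` is separated for the closed topology. -/
def SeparatedC (G : Graph') : Prop :=
  ∀ (Y : Graph') (SN : Set Y.N) (h : IsSubgraph Y SN Set.univ)
    (g₁ g₂ : Hom Y G),
      g₁.comp (incl Y SN Set.univ h) = g₂.comp (incl Y SN Set.univ h) → g₁ = g₂

/-!
Extending a morphism along a dense subgraph of `Y` only means choosing images for the nodes
of `Y` that it misses, and these are isolated. Testing against the one-node graph without arcs
and its empty dense subgraph, uniqueness of extensions forces `G` to have at most one node and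
existence forces at least one. Conversely, into a graph with a single node a morphism is the
same thing as an arbitrary map on arcs, so extensions exist and are unique.
-/

namespace Graph'

def point : Graph' := ⟨PUnit, Empty, Empty.elim, Empty.elim⟩

def bouquet (X : Type) : Graph' := ⟨PUnit, X, fun _ => PUnit.unit, fun _ => PUnit.unit⟩

lemma isSubgraph_point_empty : IsSubgraph point ∅ Set.univ := fun a _ => a.elim

instance : IsEmpty (subG point ∅ Set.univ isSubgraph_point_empty).N :=
  Set.isEmpty_coe_sort.2 rfl

end Graph'

open Graph'

namespace Hom

lemma ext_of_subsingleton {G H : Graph'} [Subsingleton H.N] {f g : Hom G H}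
    (h : f.fA = g.fA) : f = g :=
  Hom.ext (Subsingleton.elim _ _) h

lemma eq_of_isEmpty {G H : Graph'} [IsEmpty G.N] (f g : Hom G H) : f = g :=
  Hom.ext (funext isEmptyElim) (funext fun a => isEmptyElim (G.src a))

def ofIsEmpty {G H : Graph'} [IsEmpty G.N] : Hom G H :=
  ⟨isEmptyElim, fun a => isEmptyElim (G.src a), fun a => isEmptyElim (G.src a),
    fun a => isEmptyElim (G.src a)⟩

def ofArcs {G H : Graph'} [Subsingleton H.N] (n : H.N) (k : G.A → H.A) : Hom G H :=
  ⟨fun _ => n, k, fun _ => Subsingleton.elim _ _, fun _ => Subsingleton.elim _ _⟩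

def ofNode {G : Graph'} (n : G.N) : Hom point G :=
  ⟨fun _ => n, Empty.elim, fun a => a.elim, fun a => a.elim⟩

end Hom

lemma SheafC.separatedC {G : Graph'} (hG : SheafC G) : SeparatedC G :=
  fun Y SN h _ _ hg => (hG Y SN h _).unique hg rfl

lemma SheafC.nonempty {G : Graph'} (hG : SheafC G) : Nonempty G.N :=
  ⟨((hG point ∅ isSubgraph_point_empty Hom.ofIsEmpty).exists.choose).fN PUnit.unit⟩

lemma separatedC_iff_subsingleton (G : Graph') : SeparatedC G ↔ Subsingleton G.N := by
  refine ⟨fun hG => ⟨fun m n => ?_⟩, fun _ _ _ _ _ _ hg => Hom.ext_of_subsingleton ?_⟩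
  · have hmn := hG point ∅ isSubgraph_point_empty (Hom.ofNode m) (Hom.ofNode n)
      (Hom.eq_of_isEmpty _ _)
    exact congrFun (congrArg Hom.fN hmn) PUnit.unit
  · funext a
    exact congrFun (congrArg Hom.fA hg) ⟨a, trivial⟩

lemma sheafC_of_nonempty_of_subsingleton {G : Graph'} [Nonempty G.N] [Subsingleton G.N] :
    SheafC G := by
  intro Y SN h f
  refine ⟨Hom.ofArcs (Classical.arbitrary G.N) (fun a => f.fA ⟨a, trivial⟩),
    Hom.ext_of_subsingleton rfl, fun g hg => Hom.ext_of_subsingleton ?_⟩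
  funext a
  exact congrFun (congrArg Hom.fA hg) ⟨a, trivial⟩

lemma sheafC_iff_nonempty_and_subsingleton (G : Graph') :
    SheafC G ↔ Nonempty G.N ∧ Subsingleton G.N :=
  ⟨fun hG => ⟨hG.nonempty, (separatedC_iff_subsingleton G).1 hG.separatedC⟩,
    fun ⟨_, _⟩ => sheafC_of_nonempty_of_subsingleton⟩

lemma sheafC_iff_exists_forall_eq (G : Graph') : SheafC G ↔ ∃ n : G.N, ∀ m : G.N, m = n := by
  rw [sheafC_iff_nonempty_and_subsingleton]
  exact ⟨fun ⟨⟨n⟩, _⟩ => ⟨n, (subsingleton_iff_forall_eq n).1 ‹_›⟩,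
    fun ⟨n, hn⟩ => ⟨⟨n⟩, (subsingleton_iff_forall_eq n).2 hn⟩⟩

lemma bijective_fA_of_sheafC {G H : Graph'} (hH : SheafC H) :
    Function.Bijective (fun f : Hom G H => f.fA) := by
  obtain ⟨⟨n⟩, _⟩ := (sheafC_iff_nonempty_and_subsingleton H).1 hH
  exact ⟨fun _ _ => Hom.ext_of_subsingleton, fun k => ⟨Hom.ofArcs n k, rfl⟩⟩

lemma sheafC_bouquet (X : Type) : SheafC (bouquet X) :=
  (sheafC_iff_exists_forall_eq _).2 ⟨PUnit.unit, fun _ => rfl⟩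

lemma separatedC_and_not_sheafC_iff (G : Graph') :
    (SeparatedC G ∧ ¬ SheafC G) ↔ IsEmpty G.N := by
  rw [separatedC_iff_subsingleton, sheafC_iff_nonempty_and_subsingleton]
  refine ⟨fun ⟨hsub, hnot⟩ => not_nonempty_iff.1 fun hne => hnot ⟨hne, hsub⟩, fun hN => ?_⟩
  exact ⟨inferInstance, fun ⟨⟨n⟩, _⟩ => isEmptyElim n⟩

/-- sheaves for the closed topology are exactly the one-node
graphs; their category is equivalent to sets via the arc functor (fully
faithful and essentially surjective on sheaves); and the only separated
non-sheaf is the empty graph. -/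
theorem closed_sheaves :
    (∀ G : Graph', SheafC G ↔ ∃ n : G.N, ∀ m : G.N, m = n) ∧
    (∀ G H : Graph', SheafC G → SheafC H →
        Function.Bijective (fun f : Hom G H => f.fA)) ∧
    (∀ X : Type, ∃ G : Graph', SheafC G ∧ Nonempty (G.A ≃ X)) ∧
    (∀ G : Graph', (SeparatedC G ∧ ¬ SheafC G) ↔ (IsEmpty G.N ∧ IsEmpty G.A)) := by
  refine ⟨sheafC_iff_exists_forall_eq, fun _ _ _ hH => bijective_fA_of_sheafC hH,
    fun X => ⟨bouquet X, sheafC_bouquet X, ⟨Equiv.refl X⟩⟩, fun G => ?_⟩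
  rw [separatedC_and_not_sheafC_iff]
  exact ⟨fun hN => ⟨hN, ⟨fun a => isEmptyElim (G.src a)⟩⟩, And.left⟩
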